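/- Let G = ⟨V, v0, E⟩ be a graph, Φ1 and Φ2 objectives, and A1, A2 ⊆ V^ω assumptions such that the one-vertex sequence v0 belongs to pref(A1 ∩ A2). Let t1 and t2 be compatible tenders such that t1 ⊨ A1⟩Φ1⟨A2 and t2 ⊨ A2⟩Φ2⟨A1 (with t1 in the first position and t2 in the second position of the composition). Then t1‖t2 ⊨ Φ1 ∩ Φ2. -/

import Mathlib

open scoped Classical

variable {V : Type*}

/-- An action policy: given the history `ρ` and the current vertex `v`,
choose a successor of `v` (whenever `v` has a successor). -/
structure ActionPolicy (V : Type*) (E : V → V → Prop) where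
  act : List V → V → V
  valid : ∀ ρ v, (∃ u, E v u) → E v (act ρ v)

/-- A bidding policy: bids are nonnegative and do not exceed the available budget. -/
structure BiddingPolicy (V : Type*) where
  bid : V → ℝ → ℝ
  nonneg : ∀ v B, 0 ≤ bid v B
  le_budget : ∀ v B, bid v B ≤ B

/-- A strategy in a bidding game: an action policy together with a bidding policy. -/
abbrev Strategy (V : Type*) (E : V → V → Prop) := ActionPolicy V E × BiddingPolicy V

/-- A tender: an action policy, a bidding policy and a threshold budget in `[0,1]`. -/
structure Tender (V : Type*) (E : V → V → Prop) where
  act : ActionPolicy V E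
  bid : BiddingPolicy V
  thr : ℝ
  thr_nonneg : 0 ≤ thr
  thr_le_one : thr ≤ 1

/-- Two tenders are compatible iff the sum of their threshold budgets is `< 1`. -/
def Compatible {E : V → V → Prop} (t1 t2 : Tender V E) : Prop :=
  t1.thr + t2.thr < 1

/-- State of the composition after `n` steps: history, current vertex, and the current
budget of the first tender.  Ties are won by the first tender. -/
noncomputable def compState {E : V → V → Prop} (t1 t2 : Tender V E) (v : V) (B : ℝ) :
    ℕ → List V × V × ℝ
  | 0 => ([], v, B)
  | n + 1 =>
    let s := compState t1 t2 v B n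
    let ρ := s.1
    let u := s.2.1
    let B' := s.2.2
    let b1 := t1.bid.bid u B'
    let b2 := t2.bid.bid u (1 - B')
    if b2 ≤ b1 then (ρ ++ [u], t1.act.act ρ u, B' - b1)
    else (ρ ++ [u], t2.act.act ρ u, B' + b2)

/-- The infinite path generated by the composition of two tenders. -/
noncomputable def compPath {E : V → V → Prop} (t1 t2 : Tender V E) (v : V) (B : ℝ)
    (n : ℕ) : V :=
  (compState t1 t2 v B n).2.1

/-- The composition `t1 ‖ t2` (from `v`) satisfies the objective `Φ` iff for every
initial budget `B ∈ (𝔹1, 1 − 𝔹2)` the generated infinite path belongs to `Φ`. -/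
def ComposedSat {E : V → V → Prop} (t1 t2 : Tender V E) (v : V) (Φ : Set (ℕ → V)) : Prop :=
  ∀ B : ℝ, t1.thr < B → B < 1 - t2.thr → compPath t1 t2 v B ∈ Φ

/-- The tender in the first position of the composition is robust for `Φ`. -/
def RobustFst {E : V → V → Prop} (v : V) (t1 : Tender V E) (Φ : Set (ℕ → V)) : Prop :=
  ∀ t2 : Tender V E, Compatible t1 t2 → ComposedSat t1 t2 v Φ

/-- The tender in the second position of the composition is robust for `Φ`. -/
def RobustSnd {E : V → V → Prop} (v : V) (t2 : Tender V E) (Φ : Set (ℕ → V)) : Prop :=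
  ∀ t1 : Tender V E, Compatible t1 t2 → ComposedSat t1 t2 v Φ

/-- State of the zero-sum bidding game after `n` steps (history, current vertex, and
the current budget of Player X).  Ties are won by Player Y. -/
noncomputable def gameState {E : V → V → Prop} (sX sY : Strategy V E) (v : V) (B : ℝ) :
    ℕ → List V × V × ℝ
  | 0 => ([], v, B)
  | n + 1 =>
    let s := gameState sX sY v B n
    let ρ := s.1
    let u := s.2.1
    let B' := s.2.2
    let bX := sX.2.bid u B'
    let bY := sY.2.bid u (1 - B')
    if bY < bX then (ρ ++ [u], sX.1.act ρ u, B' - bX)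
    else (ρ ++ [u], sY.1.act ρ u, B' + bY)

/-- The play generated in the zero-sum bidding game. -/
noncomputable def gamePlay {E : V → V → Prop} (sX sY : Strategy V E) (v : V) (B : ℝ)
    (n : ℕ) : V :=
  (gameState sX sY v B n).2.1

/-- Player X's strategy `sX` is winning from configuration `⟨v, B⟩` for objective `Φ`. -/
def WinningFrom {E : V → V → Prop} (sX : Strategy V E) (Φ : Set (ℕ → V)) (v : V)
    (B : ℝ) : Prop :=
  ∀ sY : Strategy V E, gamePlay sX sY v B ∈ Φ

/-- The threshold budget of Player X at `v` in the bidding game `⟨G, Φ⟩`: the infimum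
of the budgets in `[0,1]` from which Player X has a winning strategy, `1` if none. -/
noncomputable def threshold (E : V → V → Prop) (Φ : Set (ℕ → V)) (v : V) : ℝ :=
  if ({B : ℝ | B ∈ Set.Icc (0 : ℝ) 1 ∧ ∃ sX : Strategy V E, WinningFrom sX Φ v B}).Nonempty
  then sInf {B : ℝ | B ∈ Set.Icc (0 : ℝ) 1 ∧ ∃ sX : Strategy V E, WinningFrom sX Φ v B}
  else 1

lemma threshold_nonneg (E : V → V → Prop) (Φ : Set (ℕ → V)) (v : V) :
    0 ≤ threshold E Φ v := by
  unfold threshold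
  split
  · next h => exact le_csInf h fun b hb => hb.1.1
  · norm_num

lemma threshold_le_one (E : V → V → Prop) (Φ : Set (ℕ → V)) (v : V) :
    threshold E Φ v ≤ 1 := by
  unfold threshold
  split
  · next h =>
    obtain ⟨b, hb⟩ := h
    exact le_trans (csInf_le ⟨0, fun x hx => hx.1.1⟩ hb) hb.1.2
  · exact le_refl 1

/-- Reachability objective. -/
def ReachObj (T : Set V) : Set (ℕ → V) := {ρ | ∃ i, ρ i ∈ T}

/-- Büchi objective. -/
def BuchiObj (S : Set V) : Set (ℕ → V) := {ρ | ∀ n, ∃ i, n ≤ i ∧ ρ i ∈ S}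

/-- The set of vertices occurring infinitely often in `ρ`. -/
def InfOcc (ρ : ℕ → V) : Set V := {v | ∀ n, ∃ i, n ≤ i ∧ ρ i = v}

/-- Parity (max, even) objective. -/
def ParityObj (Col : V → ℕ) : Set (ℕ → V) :=
  {ρ | ∃ v ∈ InfOcc ρ, (∀ u ∈ InfOcc ρ, Col u ≤ Col v) ∧ Even (Col v)}

/-- A sink: its only outgoing edge is its self-loop. -/
def IsSink (E : V → V → Prop) (v : V) : Prop := ∀ u, E v u ↔ u = v

/-- A binary graph: every vertex has at most two successors. -/
def Binary (E : V → V → Prop) : Prop := ∀ v, ∃ a b, ∀ u, E v u → u = a ∨ u = b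

/-- Strongly connected: there is a path between every ordered pair of vertices. -/
def StronglyConnected (E : V → V → Prop) : Prop := ∀ u v, Relation.ReflTransGen E u v

/-- An SCC: a maximal set with a path between every ordered pair of its vertices. -/
def IsSCC (E : V → V → Prop) (S : Set V) : Prop :=
  S.Nonempty ∧ (∀ u ∈ S, ∀ v ∈ S, Relation.ReflTransGen E u v) ∧
    ∀ S' : Set V, S ⊆ S' → (∀ u ∈ S', ∀ v ∈ S', Relation.ReflTransGen E u v) → S' = S

/-- A BSCC: an SCC without outgoing edges. -/
def IsBSCC (E : V → V → Prop) (S : Set V) : Prop :=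
  IsSCC E S ∧ ∀ u ∈ S, ∀ v, E u v → v ∈ S

/-- `t` dominates `t'` (both in the first position) with respect to `Φ`. -/
def DominatesFst {E : V → V → Prop} (v : V) (Φ : Set (ℕ → V)) (t t' : Tender V E) : Prop :=
  t.thr = t'.thr ∧
  (∀ s : Tender V E, Compatible t s → ComposedSat t' s v Φ → ComposedSat t s v Φ) ∧
  (∃ s : Tender V E, Compatible t s ∧ ComposedSat t s v Φ ∧ ¬ ComposedSat t' s v Φ)

/-- `t` dominates `t'` (both in the second position) with respect to `Φ`. -/
def DominatesSnd {E : V → V → Prop} (v : V) (Φ : Set (ℕ → V)) (t t' : Tender V E) : Prop :=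
  t.thr = t'.thr ∧
  (∀ s : Tender V E, Compatible s t → ComposedSat s t' v Φ → ComposedSat s t v Φ) ∧
  (∃ s : Tender V E, Compatible s t ∧ ComposedSat s t v Φ ∧ ¬ ComposedSat s t' v Φ)

/-- `Φ`-admissible in the first position: not dominated by any tender. -/
def AdmissibleFst {E : V → V → Prop} (v : V) (Φ : Set (ℕ → V)) (t : Tender V E) : Prop :=
  ¬ ∃ t' : Tender V E, DominatesFst v Φ t' t

/-- `Φ`-admissible in the second position: not dominated by any tender. -/
def AdmissibleSnd {E : V → V → Prop} (v : V) (Φ : Set (ℕ → V)) (t : Tender V E) : Prop :=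
  ¬ ∃ t' : Tender V E, DominatesSnd v Φ t' t

/-- `t1` (first position) is `Φ2`-admissible-winning for `Φ1`. -/
def AdmWinFst {E : V → V → Prop} (v : V) (Φ1 Φ2 : Set (ℕ → V)) (t1 : Tender V E) : Prop :=
  AdmissibleFst v Φ1 t1 ∧
    ∀ t2 : Tender V E, AdmissibleSnd v Φ2 t2 → Compatible t1 t2 → ComposedSat t1 t2 v Φ1

/-- `t2` (second position) is `Φ1`-admissible-winning for `Φ2`. -/
def AdmWinSnd {E : V → V → Prop} (v : V) (Φ2 Φ1 : Set (ℕ → V)) (t2 : Tender V E) : Prop :=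
  AdmissibleSnd v Φ2 t2 ∧
    ∀ t1 : Tender V E, AdmissibleFst v Φ1 t1 → Compatible t1 t2 → ComposedSat t1 t2 v Φ2

/-- Vertices of the largest admissible sub-graph (reachability objectives). -/
def lasVertices (E : V → V → Prop) (Φ1 Φ2 : Set (ℕ → V)) : Set V :=
  {v | ¬ (threshold E Φ1 v = 1 ∧ threshold E Φ2 v = 1)}

/-- Edges of the largest admissible sub-graph (reachability objectives). -/
def lasEdge (E : V → V → Prop) (Φ1 Φ2 : Set (ℕ → V)) : V → V → Prop :=
  fun u w => u ∈ lasVertices E Φ1 Φ2 ∧ w ∈ lasVertices E Φ1 Φ2 ∧ E u w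

/-- Vertices of the largest admissible sub-graph for Büchi objectives: those vertices
from which some infinite path of the graph lies in `Φ` (typically `Φ = Φ1 ∪ Φ2`). -/
def lasBVertices (E : V → V → Prop) (Φ : Set (ℕ → V)) : Set V :=
  {v | ∃ ρ : ℕ → V, ρ 0 = v ∧ (∀ i, E (ρ i) (ρ (i + 1))) ∧ ρ ∈ Φ}

/-- Edges of the largest admissible sub-graph for Büchi objectives. -/
def lasBEdge (E : V → V → Prop) (Φ : Set (ℕ → V)) : V → V → Prop :=
  fun u w => u ∈ lasBVertices E Φ ∧ w ∈ lasBVertices E Φ ∧ E u w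

/-- Restriction of the edge relation to a set of vertices. -/
def restrictE (E : V → V → Prop) (S : Set V) : V → V → Prop :=
  fun u v => u ∈ S ∧ v ∈ S ∧ E u v

/-- Finite prefixes of elements of a set of infinite sequences. -/
def prefInf (L : Set (ℕ → V)) : Set (List V) :=
  {w | ∃ ρ ∈ L, ∃ n, w = (List.range n).map ρ}

/-- Infinite sequences all of whose finite prefixes are prefixes of elements of `L`. -/
def SafePref (L : Set (ℕ → V)) : Set (ℕ → V) :=
  {ρ | ∀ n, (List.range n).map ρ ∈ prefInf L}

/-- `t1` (first position) fulfills `Φ1` under the contract `⟨A1, A2⟩`. -/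
def FulfillsContractFst {E : V → V → Prop} (v0 : V) (t1 : Tender V E)
    (Φ1 A1 A2 : Set (ℕ → V)) : Prop :=
  (∀ (ρ : List V) (u : V), (ρ ++ [u]).Chain' E → (ρ ++ [u]).head? = some v0 →
      (ρ ++ [u]) ∈ prefInf A1 → (ρ ++ [u] ++ [t1.act.act ρ u]) ∈ prefInf (A1 ∩ A2)) ∧
  ∀ t2 : Tender V E, Compatible t1 t2 → ∀ B : ℝ, t1.thr < B → B < 1 - t2.thr →
      compPath t1 t2 v0 B ∈ SafePref (A1 ∩ A2) →
      compPath t1 t2 v0 B ∈ A2 ∧ (compPath t1 t2 v0 B ∈ A1 → compPath t1 t2 v0 B ∈ Φ1)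

/-- `t2` (second position) fulfills `Φ2` under the contract `⟨A1, A2⟩`. -/
def FulfillsContractSnd {E : V → V → Prop} (v0 : V) (t2 : Tender V E)
    (Φ2 A1 A2 : Set (ℕ → V)) : Prop :=
  (∀ (ρ : List V) (u : V), (ρ ++ [u]).Chain' E → (ρ ++ [u]).head? = some v0 →
      (ρ ++ [u]) ∈ prefInf A2 → (ρ ++ [u] ++ [t2.act.act ρ u]) ∈ prefInf (A1 ∩ A2)) ∧
  ∀ t1 : Tender V E, Compatible t1 t2 → ∀ B : ℝ, t1.thr < B → B < 1 - t2.thr →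
      compPath t1 t2 v0 B ∈ SafePref (A1 ∩ A2) →
      compPath t1 t2 v0 B ∈ A1 ∧ (compPath t1 t2 v0 B ∈ A2 → compPath t1 t2 v0 B ∈ Φ2)

/-!
Whoever wins a bid moves by its own action policy from a history lying in `pref(Aᵢ)`,
so by clause (a) of its contract the extended history stays in `pref(A₁ ∩ A₂)`. By induction
the generated path lies in `Safe(pref(A₁ ∩ A₂))`. Clause (b) of each contract then puts the
path in both assumptions, and therefore in both objectives.
-/

lemma prefInf_mono {L L' : Set (ℕ → V)} (h : L ⊆ L') : prefInf L ⊆ prefInf L' := by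
  rintro w ⟨ρ, hρ, n, rfl⟩
  exact ⟨ρ, h hρ, n, rfl⟩

lemma mem_safePref_of_forall_succ {L : Set (ℕ → V)} {ρ : ℕ → V}
    (h : ∀ n, (List.range (n + 1)).map ρ ∈ prefInf L) : ρ ∈ SafePref L := by
  rintro (_ | n)
  · obtain ⟨σ, hσ, _⟩ := h 0
    exact ⟨σ, hσ, 0, rfl⟩
  · exact h n

section compState

variable {E : V → V → Prop} (t1 t2 : Tender V E) (v : V) (B : ℝ)

lemma compState_succ_fst (n : ℕ) :
    (compState t1 t2 v B (n + 1)).1 =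
      (compState t1 t2 v B n).1 ++ [(compState t1 t2 v B n).2.1] := by
  simp only [compState]
  split <;> rfl

lemma compPath_succ_eq_or (n : ℕ) :
    compPath t1 t2 v B (n + 1) = t1.act.act (compState t1 t2 v B n).1 (compPath t1 t2 v B n) ∨
      compPath t1 t2 v B (n + 1) = t2.act.act (compState t1 t2 v B n).1 (compPath t1 t2 v B n) := by
  simp only [compPath, compState]
  split
  exacts [Or.inl rfl, Or.inr rfl]

lemma map_range_succ_compPath (n : ℕ) :
    (List.range (n + 1)).map (compPath t1 t2 v B) =
      (compState t1 t2 v B n).1 ++ [(compState t1 t2 v B n).2.1] := by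
  induction n with
  | zero => rfl
  | succ n ih => rw [List.range_succ, List.map_append, ih, compState_succ_fst]; rfl

lemma head?_map_range_succ_compPath (n : ℕ) :
    ((List.range (n + 1)).map (compPath t1 t2 v B)).head? = some v := by
  rw [List.range_succ_eq_map]
  rfl

lemma compPath_rel (hE : ∀ u, ∃ w, E u w) (n : ℕ) :
    E (compPath t1 t2 v B n) (compPath t1 t2 v B (n + 1)) := by
  rcases compPath_succ_eq_or t1 t2 v B n with h | h <;> rw [h]
  exacts [t1.act.valid _ _ (hE _), t2.act.valid _ _ (hE _)]

lemma isChain_map_range_succ_compPath (hE : ∀ u, ∃ w, E u w) (n : ℕ) :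
    ((List.range (n + 1)).map (compPath t1 t2 v B)).IsChain E := by
  rw [List.isChain_map, List.isChain_range_succ]
  exact fun m _ => compPath_rel t1 t2 v B hE m

end compState

lemma map_range_succ_compPath_mem_prefInf {E : V → V → Prop} (hE : ∀ v, ∃ u, E v u)
    {v0 : V} {Φ1 Φ2 A1 A2 : Set (ℕ → V)} (hv0 : [v0] ∈ prefInf (A1 ∩ A2))
    {t1 t2 : Tender V E} (h1 : FulfillsContractFst v0 t1 Φ1 A1 A2)
    (h2 : FulfillsContractSnd v0 t2 Φ2 A1 A2) (B : ℝ) (n : ℕ) :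
    (List.range (n + 1)).map (compPath t1 t2 v0 B) ∈ prefInf (A1 ∩ A2) := by
  induction n with
  | zero => exact hv0
  | succ n ih =>
    have hchain := isChain_map_range_succ_compPath t1 t2 v0 B hE n
    have hhead := head?_map_range_succ_compPath t1 t2 v0 B n
    rw [map_range_succ_compPath] at ih hchain hhead
    rw [List.range_succ, List.map_append, map_range_succ_compPath, List.map_singleton]
    rcases compPath_succ_eq_or t1 t2 v0 B n with h | h <;> rw [h]
    · exact h1.1 _ _ hchain hhead (prefInf_mono Set.inter_subset_left ih)
    · exact h2.1 _ _ hchain hhead (prefInf_mono Set.inter_subset_right ih)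

theorem stmt17_general (E : V → V → Prop) (v0 : V) (hE : ∀ v, ∃ u, E v u)
    (Φ1 Φ2 A1 A2 : Set (ℕ → V)) (hv0 : [v0] ∈ prefInf (A1 ∩ A2))
    (t1 t2 : Tender V E) (hc : Compatible t1 t2)
    (h1 : FulfillsContractFst v0 t1 Φ1 A1 A2)
    (h2 : FulfillsContractSnd v0 t2 Φ2 A1 A2) :
    ComposedSat t1 t2 v0 (Φ1 ∩ Φ2) := by
  intro B hB1 hB2
  have hsafe : compPath t1 t2 v0 B ∈ SafePref (A1 ∩ A2) :=
    mem_safePref_of_forall_succ (map_range_succ_compPath_mem_prefInf hE hv0 h1 h2 B)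
  obtain ⟨hA2, hΦ1⟩ := h1.2 t2 hc B hB1 hB2 hsafe
  obtain ⟨hA1, hΦ2⟩ := h2.2 t1 hc B hB1 hB2 hsafe
  exact ⟨hΦ1 hA1, hΦ2 hA2⟩

/-- sound composition of contract-abiding tenders. -/
theorem stmt17 [Fintype V] (E : V → V → Prop) (v0 : V) (hE : ∀ v, ∃ u, E v u)
    (Φ1 Φ2 A1 A2 : Set (ℕ → V)) (hv0 : [v0] ∈ prefInf (A1 ∩ A2))
    (t1 t2 : Tender V E) (hc : Compatible t1 t2)
    (h1 : FulfillsContractFst v0 t1 Φ1 A1 A2)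
    (h2 : FulfillsContractSnd v0 t2 Φ2 A1 A2) :
    ComposedSat t1 t2 v0 (Φ1 ∩ Φ2) :=
  stmt17_general E v0 hE Φ1 Φ2 A1 A2 hv0 t1 t2 hc h1 h2
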